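/- arXiv:0804.0715 — 3 statements merged into one kernel-verified Lean document; each statement's English description precedes it below -/
import Mathlib

section
/- Let α > 0 be fixed and let J = ∫_T^{T'} t^α (t/(eβ))^{it} dt, where β > 0 and 0 < T ≤ T' ≤ 2T. If β < T, then J = O(T^α / log(T/β)), with the implied constant depending only on α. -/
open Complex Real

private lemma log_div_hasDerivAt {c t : ℝ} (hc : c ≠ 0) (ht : t ≠ 0) :
    HasDerivAt (fun s : ℝ => Real.log (s / c)) t⁻¹ t := by
  have h := (Real.hasDerivAt_log (div_ne_zero ht hc)).comp t ((hasDerivAt_id t).div_const c)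
  refine h.congr_deriv ?_
  field_simp

/-- Potter–Titchmarsh exponential integral estimate, first case: for fixed `α > 0`,
`J = ∫_T^{T'} t^α (t/(eβ))^{it} dt = O(T^α / log(T/β))` when `β < T ≤ T' ≤ 2T`,
the implied constant depending only on `α`. -/
theorem exp_integral_case_beta_lt_T (α : ℝ) (hα : 0 < α) :
    ∃ C : ℝ, ∀ T T' β : ℝ, 0 < T → T ≤ T' → T' ≤ 2 * T → 0 < β → β < T →
      ‖∫ t in T..T', ((t ^ α : ℝ) : ℂ) *
          Complex.exp (I * t * Real.log (t / (Real.exp 1 * β)))‖ ≤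
        C * T ^ α / Real.log (T / β) := by
  refine ⟨4 * 2 ^ α, ?_⟩
  intro T T' β hT hTT' hT2 hβ hβT
  set L : ℝ → ℝ := fun t => Real.log (t / β) with hL
  have hmem : ∀ t ∈ Set.uIcc T T', T ≤ t ∧ t ≤ T' := by
    intro t ht
    rw [Set.uIcc_of_le hTT'] at ht
    exact ⟨ht.1, ht.2⟩
  have hLpos : ∀ {t : ℝ}, β < t → 0 < L t := fun {t} ht =>
    Real.log_pos ((one_lt_div hβ).mpr ht)
  have hLmono : ∀ {s t : ℝ}, β < s → s ≤ t → L s ≤ L t := by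
    intro s t hs hst
    exact Real.log_le_log (div_pos (hβ.trans hs) hβ) ((div_le_div_iff_of_pos_right hβ).mpr hst)
  have hLT : 0 < L T := hLpos hβT
  -- the functions
  set v : ℝ → ℂ := fun t => Complex.exp (I * t * Real.log (t / (Real.exp 1 * β))) with hv
  set u : ℝ → ℂ := fun t => ((t ^ α : ℝ) : ℂ) / (I * ((L t : ℝ) : ℂ)) with hu
  set u' : ℝ → ℂ := fun t =>
      (((α * t ^ (α - 1) : ℝ) : ℂ) * (I * ((L t : ℝ) : ℂ))
        - ((t ^ α : ℝ) : ℂ) * (I * ((t⁻¹ : ℝ) : ℂ))) / (I * ((L t : ℝ) : ℂ)) ^ 2 with hu'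
  set v' : ℝ → ℂ := fun t => v t * (I * ((L t : ℝ) : ℂ)) with hv'
  -- derivative facts
  have hderivu : ∀ t ∈ Set.uIcc T T', HasDerivAt u (u' t) t := by
    intro t htm
    obtain ⟨h1, _⟩ := hmem t htm
    have ht0 : 0 < t := lt_of_lt_of_le hT h1
    have hβt : β < t := lt_of_lt_of_le hβT h1
    have hLt : 0 < L t := hLpos hβt
    have hf : HasDerivAt (fun s : ℝ => ((s ^ α : ℝ) : ℂ)) ((α * t ^ (α - 1) : ℝ) : ℂ) t :=
      (Real.hasDerivAt_rpow_const (Or.inl ht0.ne')).ofReal_comp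
    have hg : HasDerivAt (fun s : ℝ => I * ((L s : ℝ) : ℂ)) (I * ((t⁻¹ : ℝ) : ℂ)) t :=
      ((log_div_hasDerivAt hβ.ne' ht0.ne').ofReal_comp).const_mul I
    have hne : I * ((L t : ℝ) : ℂ) ≠ 0 :=
      mul_ne_zero I_ne_zero (Complex.ofReal_ne_zero.mpr hLt.ne')
    exact hf.div hg hne
  have hderivv : ∀ t ∈ Set.uIcc T T', HasDerivAt v (v' t) t := by
    intro t htm
    obtain ⟨h1, _⟩ := hmem t htm
    have ht0 : 0 < t := lt_of_lt_of_le hT h1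
    have hβt : β < t := lt_of_lt_of_le hβT h1
    have he : (0:ℝ) < Real.exp 1 * β := by positivity
    have h1' : HasDerivAt (fun s : ℝ => ((s : ℝ) : ℂ)) ((1 : ℝ) : ℂ) t :=
      (hasDerivAt_id t).ofReal_comp
    have h2' : HasDerivAt (fun s : ℝ => ((Real.log (s / (Real.exp 1 * β)) : ℝ) : ℂ))
        ((t⁻¹ : ℝ) : ℂ) t := (log_div_hasDerivAt he.ne' ht0.ne').ofReal_comp
    have h3 := (h1'.mul h2').const_mul I
    have heq : (fun s : ℝ => I * (((s : ℝ) : ℂ) * ((Real.log (s / (Real.exp 1 * β)) : ℝ) : ℂ)))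
        = fun s : ℝ => I * (s : ℂ) * ((Real.log (s / (Real.exp 1 * β)) : ℝ) : ℂ) := by
      funext s; ring
    simp only [Pi.mul_apply] at h3
    rw [heq] at h3
    have hinner : HasDerivAt (fun s : ℝ => I * (s : ℂ) * ((Real.log (s / (Real.exp 1 * β)) : ℝ) : ℂ))
        (I * ((L t : ℝ) : ℂ)) t := by
      refine h3.congr_deriv ?_
      have hlog : Real.log (t / (Real.exp 1 * β)) = L t - 1 := by
        simp only [hL]
        rw [Real.log_div ht0.ne' he.ne', Real.log_div ht0.ne' hβ.ne',
          Real.log_mul (Real.exp_ne_zero 1) hβ.ne', Real.log_exp]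
        ring
      rw [hlog]
      push_cast
      rw [mul_inv_cancel₀ (Complex.ofReal_ne_zero.mpr ht0.ne' : (t:ℂ) ≠ 0)]
      ring
    exact hinner.cexp
  -- continuity facts
  have hSpos : ∀ t ∈ Set.uIcc T T', (0:ℝ) < t := fun t ht => lt_of_lt_of_le hT (hmem t ht).1
  have hSβ : ∀ t ∈ Set.uIcc T T', β < t := fun t ht => lt_of_lt_of_le hβT (hmem t ht).1
  have hLcont : ContinuousOn L (Set.uIcc T T') :=
    ContinuousOn.log (continuousOn_id.div_const β)
      (fun t ht => div_ne_zero (hSpos t ht).ne' hβ.ne')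
  have hLCcont : ContinuousOn (fun t => ((L t : ℝ) : ℂ)) (Set.uIcc T T') :=
    Complex.continuous_ofReal.comp_continuousOn hLcont
  have hILne : ∀ t ∈ Set.uIcc T T', I * ((L t : ℝ) : ℂ) ≠ 0 := fun t ht =>
    mul_ne_zero I_ne_zero (Complex.ofReal_ne_zero.mpr (hLpos (hSβ t ht)).ne')
  have hvcont : ContinuousOn v (Set.uIcc T T') := by
    apply Complex.continuous_exp.comp_continuousOn
    apply ContinuousOn.mul
    · exact (continuous_const.mul Complex.continuous_ofReal).continuousOn
    · exact Complex.continuous_ofReal.comp_continuousOn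
        (ContinuousOn.log (continuousOn_id.div_const _)
          (fun t ht => div_ne_zero (hSpos t ht).ne' (by positivity)))
  have hrpowc : ∀ p : ℝ, ContinuousOn (fun t : ℝ => ((t ^ p : ℝ) : ℂ)) (Set.uIcc T T') :=
    fun p => Complex.continuous_ofReal.comp_continuousOn
      (ContinuousOn.rpow_const continuousOn_id (fun t ht => Or.inl (hSpos t ht).ne'))
  have hu'cont : ContinuousOn u' (Set.uIcc T T') := by
    apply ContinuousOn.div
    · apply ContinuousOn.sub
      · exact (Complex.continuous_ofReal.comp_continuousOn
          ((continuousOn_const.mul (ContinuousOn.rpow_const continuousOn_id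
            (fun t ht => Or.inl (hSpos t ht).ne'))))).mul
          (continuousOn_const.mul hLCcont)
      · exact (hrpowc α).mul (continuousOn_const.mul
          (Complex.continuous_ofReal.comp_continuousOn
            (continuousOn_id.inv₀ (fun t ht => (hSpos t ht).ne'))))
    · exact (continuousOn_const.mul hLCcont).pow 2
    · exact fun t ht => pow_ne_zero 2 (hILne t ht)
  have hv'cont : ContinuousOn v' (Set.uIcc T T') :=
    hvcont.mul (continuousOn_const.mul hLCcont)
  have hu'int : IntervalIntegrable u' MeasureTheory.volume T T' := hu'cont.intervalIntegrable
  have hv'int : IntervalIntegrable v' MeasureTheory.volume T T' := hv'cont.intervalIntegrable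
  -- integration by parts
  have hparts := intervalIntegral.integral_mul_deriv_eq_deriv_mul hderivu hderivv hu'int hv'int
  have hcongr : (∫ t in T..T', ((t ^ α : ℝ) : ℂ) *
      Complex.exp (I * t * Real.log (t / (Real.exp 1 * β)))) = ∫ t in T..T', u t * v' t := by
    apply intervalIntegral.integral_congr
    intro t ht
    have hne := hILne t ht
    have hL0 : ((L t : ℝ) : ℂ) ≠ 0 := right_ne_zero_of_mul hne
    simp only [hu, hv', hv]
    field_simp
  rw [hcongr, hparts]
  -- norms
  have hvnorm : ∀ t : ℝ, ‖v t‖ = 1 := by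
    intro t
    simp only [hv]
    rw [Complex.norm_exp]
    norm_num [Complex.mul_re, Complex.I_re, Complex.I_im, Complex.ofReal_re, Complex.ofReal_im]
  have hunorm : ∀ t : ℝ, β < t → ‖u t‖ = t ^ α / L t := by
    intro t ht
    have ht0 : 0 < t := hβ.trans ht
    simp only [hu]
    rw [norm_div, norm_mul,
      Complex.norm_I, Complex.norm_real, Complex.norm_real, Real.norm_eq_abs, Real.norm_eq_abs, one_mul,
      abs_of_pos (Real.rpow_pos_of_pos ht0 α), abs_of_pos (hLpos ht)]
  -- the comparison function g
  set g : ℝ → ℝ := fun t => α * t ^ (α - 1) / L T + 2 ^ α * T ^ α * (t * L t ^ 2)⁻¹ with hg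
  have hginv_cont : ContinuousOn (fun t : ℝ => (t * L t ^ 2)⁻¹) (Set.uIcc T T') := by
    apply ContinuousOn.inv₀
    · exact continuousOn_id.mul (hLcont.pow 2)
    · intro t ht
      have := hSpos t ht
      have := hLpos (hSβ t ht)
      positivity
  have hginv_int : IntervalIntegrable (fun t : ℝ => (t * L t ^ 2)⁻¹)
      MeasureTheory.volume T T' := hginv_cont.intervalIntegrable
  have hg1_int : IntervalIntegrable (fun t : ℝ => α * t ^ (α - 1) / L T)
      MeasureTheory.volume T T' := by
    apply ContinuousOn.intervalIntegrable
    exact (continuousOn_const.mul (ContinuousOn.rpow_const continuousOn_id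
      (fun t ht => Or.inl (hSpos t ht).ne'))).div_const _
  have hgint : IntervalIntegrable g MeasureTheory.volume T T' := by
    rw [hg]
    exact hg1_int.add (hginv_int.const_mul _)
  -- pointwise bound
  have hptwise : ∀ t ∈ Set.uIoc T T', ‖u' t * v t‖ ≤ g t := by
    intro t htm
    rw [Set.uIoc_of_le hTT'] at htm
    have h1 : T ≤ t := le_of_lt htm.1
    have ht0 : 0 < t := hT.trans htm.1
    have hβt : β < t := hβT.trans htm.1
    have hLt : 0 < L t := hLpos hβt
    have hLTt : L T ≤ L t := hLmono hβT h1
    have ht2T : t ≤ 2 * T := le_trans htm.2 hT2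
    have htα : t ^ α ≤ 2 ^ α * T ^ α := by
      calc t ^ α ≤ (2 * T) ^ α := Real.rpow_le_rpow ht0.le ht2T hα.le
      _ = 2 ^ α * T ^ α := Real.mul_rpow (by norm_num) hT.le
    rw [norm_mul, hvnorm, mul_one]
    simp only [hu']
    have hden : ‖(I * ((L t : ℝ) : ℂ)) ^ 2‖ = L t ^ 2 := by
      rw [norm_pow, norm_mul, Complex.norm_I,
        Complex.norm_real, Real.norm_eq_abs, one_mul, abs_of_pos hLt]
    have hnum : ‖((α * t ^ (α - 1) : ℝ) : ℂ) * (I * ((L t : ℝ) : ℂ))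
        - ((t ^ α : ℝ) : ℂ) * (I * ((t⁻¹ : ℝ) : ℂ))‖
        ≤ α * t ^ (α - 1) * L t + t ^ α * t⁻¹ := by
      refine (norm_sub_le _ _).trans ?_
      rw [norm_mul, norm_mul, norm_mul, norm_mul]
      simp only [Complex.norm_real, Real.norm_eq_abs, Complex.norm_I, one_mul]
      rw [abs_of_pos (by positivity : (0:ℝ) < α * t ^ (α - 1)), abs_of_pos hLt,
        abs_of_pos (Real.rpow_pos_of_pos ht0 α), abs_of_pos (by positivity : (0:ℝ) < t⁻¹)]
    calc ‖(((α * t ^ (α - 1) : ℝ) : ℂ) * (I * ((L t : ℝ) : ℂ))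
          - ((t ^ α : ℝ) : ℂ) * (I * ((t⁻¹ : ℝ) : ℂ))) / (I * ((L t : ℝ) : ℂ)) ^ 2‖
        = ‖((α * t ^ (α - 1) : ℝ) : ℂ) * (I * ((L t : ℝ) : ℂ))
          - ((t ^ α : ℝ) : ℂ) * (I * ((t⁻¹ : ℝ) : ℂ))‖ / L t ^ 2 := by rw [norm_div, hden]
      _ ≤ (α * t ^ (α - 1) * L t + t ^ α * t⁻¹) / L t ^ 2 := by gcongr
      _ = α * t ^ (α - 1) / L t + t ^ α * (t * L t ^ 2)⁻¹ := by field_simp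
      _ ≤ g t := by
          apply add_le_add
          · gcongr
          · gcongr
  -- integral of g
  have hIg1 : (∫ t in T..T', α * t ^ (α - 1) / L T) = (T' ^ α - T ^ α) / L T := by
    simp only [div_eq_mul_inv]
    rw [intervalIntegral.integral_mul_const, intervalIntegral.integral_const_mul,
      integral_rpow (Or.inl (by linarith : (-1:ℝ) < α - 1))]
    rw [sub_add_cancel]
    field_simp
  have hIg2 : (∫ t in T..T', (t * L t ^ 2)⁻¹) = (L T)⁻¹ - (L T')⁻¹ := by
    have hder : ∀ t ∈ Set.uIcc T T', HasDerivAt (fun s => -(L s)⁻¹) ((t * L t ^ 2)⁻¹) t := by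
      intro t ht
      have ht0 : 0 < t := hSpos t ht
      have hLt : 0 < L t := hLpos (hSβ t ht)
      have := ((log_div_hasDerivAt hβ.ne' ht0.ne').inv hLt.ne').neg
      refine this.congr_deriv ?_
      rw [mul_inv]
      field_simp
      exact div_self (pow_ne_zero 2 hLt.ne')
    rw [intervalIntegral.integral_eq_sub_of_hasDerivAt hder hginv_int]
    ring
  have hIg : (∫ t in T..T', g t) = (T' ^ α - T ^ α) / L T
      + 2 ^ α * T ^ α * ((L T)⁻¹ - (L T')⁻¹) := by
    rw [hg, intervalIntegral.integral_add hg1_int (hginv_int.const_mul _),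
      hIg1, intervalIntegral.integral_const_mul, hIg2]
  -- bound for the integral term
  have hLT' : 0 < L T' := lt_of_lt_of_le hLT (hLmono hβT hTT')
  have hibound : ‖∫ t in T..T', u' t * v t‖ ≤ (T' ^ α - T ^ α) / L T
      + 2 ^ α * T ^ α * ((L T)⁻¹ - (L T')⁻¹) := by
    have h := intervalIntegral.norm_integral_le_abs_of_norm_le
      ((MeasureTheory.ae_restrict_iff' measurableSet_uIoc).mpr
        (Filter.Eventually.of_forall hptwise)) hgint
    rw [hIg] at h
    refine h.trans (le_of_eq (abs_of_nonneg ?_))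
    have h1 : (0:ℝ) ≤ (T' ^ α - T ^ α) / L T := by
      apply div_nonneg _ hLT.le
      have := Real.rpow_le_rpow hT.le hTT' hα.le
      linarith
    have h2 : (L T')⁻¹ ≤ (L T)⁻¹ := inv_anti₀ hLT (hLmono hβT hTT')
    have h3 : (0:ℝ) ≤ 2 ^ α * T ^ α := by positivity
    nlinarith
  have hT'α : T' ^ α ≤ 2 ^ α * T ^ α := by
    calc T' ^ α ≤ (2 * T) ^ α := Real.rpow_le_rpow (hT.trans_le hTT').le hT2 hα.le
    _ = 2 ^ α * T ^ α := Real.mul_rpow (by norm_num) hT.le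
  have hTα : T ^ α ≤ 2 ^ α * T ^ α := by
    nlinarith [Real.rpow_pos_of_pos hT α, Real.one_le_rpow (by norm_num : (1:ℝ) ≤ 2) hα.le]
  have hA : (0:ℝ) < 2 ^ α * T ^ α := by positivity
  calc ‖u T' * v T' - u T * v T - ∫ t in T..T', u' t * v t‖
      ≤ ‖u T' * v T' - u T * v T‖ + ‖∫ t in T..T', u' t * v t‖ := norm_sub_le _ _
    _ ≤ (‖u T' * v T'‖ + ‖u T * v T‖) + ‖∫ t in T..T', u' t * v t‖ := by
        gcongr
        exact norm_sub_le _ _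
    _ = T' ^ α / L T' + T ^ α / L T + ‖∫ t in T..T', u' t * v t‖ := by
        rw [norm_mul, norm_mul, hvnorm, hvnorm, mul_one, mul_one,
          hunorm T' (hβT.trans_le hTT'), hunorm T hβT]
    _ ≤ 2 ^ α * T ^ α / L T + T ^ α / L T + ((2 ^ α * T ^ α - T ^ α) / L T
        + 2 ^ α * T ^ α / L T) := by
        apply add_le_add (add_le_add ?_ le_rfl)
        · refine hibound.trans (add_le_add ?_ ?_)
          · exact (div_le_div_iff_of_pos_right hLT).mpr (by linarith)
          · rw [div_eq_mul_inv]
            have hsub : (L T)⁻¹ - (L T')⁻¹ ≤ (L T)⁻¹ := sub_le_self _ (by positivity)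
            exact mul_le_mul_of_nonneg_left hsub hA.le
        · exact div_le_div₀ (by positivity) hT'α hLT (hLmono hβT hTT')
    _ = 3 * (2 ^ α * T ^ α) / L T := by ring
    _ ≤ 4 * 2 ^ α * T ^ α / L T := by
        apply (div_le_div_iff_of_pos_right hLT).mpr
        nlinarith
end

section
/- Let α > 0 be fixed and let J = ∫_T^{T'} t^α (t/(eβ))^{it} dt, where β > 0 and 0 < T ≤ T' ≤ 2T. If T' < β, then J = O(T^α / log(β/T')), with the implied constant depending only on α. -/
open Complex Real

/-- Potter–Titchmarsh exponential integral estimate, third case: for fixed `α > 0`,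
`J = ∫_T^{T'} t^α (t/(eβ))^{it} dt = O(T^α / log(β/T'))` when `0 < T ≤ T' ≤ 2T` and `T' < β`, the implied constant depending only on `α`. -/
theorem exp_integral_case_T'_lt_beta (α : ℝ) (hα : 0 < α) :
    ∃ C : ℝ, ∀ T T' β : ℝ, 0 < T → T ≤ T' → T' ≤ 2 * T → 0 < β → T' < β →
      ‖∫ t in T..T', ((t ^ α : ℝ) : ℂ) *
          Complex.exp (I * t * Real.log (t / (Real.exp 1 * β)))‖ ≤
        C * T ^ α / Real.log (β / T') := by
  refine ⟨3 * 2 ^ α + 1, ?_⟩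
  intro T T' β hT hTT' hT2 hβ hT'β
  have hT' : 0 < T' := hT.trans_le hTT'
  set L : ℝ := Real.log β - Real.log T' with hLdef
  have hL0 : 0 < L := sub_pos.2 (Real.log_lt_log hT' hT'β)
  have hLeq : Real.log (β / T') = L := Real.log_div hβ.ne' hT'.ne'
  have hc : (0:ℝ) < Real.exp 1 * β := by positivity
  have hlogc : Real.log (Real.exp 1 * β) = 1 + Real.log β := by
    rw [Real.log_mul (Real.exp_pos 1).ne' hβ.ne', Real.log_exp]
  set ψ : ℝ → ℝ := fun t => Real.log t - Real.log β with hψdef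
  set φ : ℝ → ℝ := fun t => t * Real.log (t / (Real.exp 1 * β)) with hφdef
  set E : ℝ → ℂ := fun t => Complex.exp (I * φ t) with hEdef
  -- basic facts on [T, T']
  have hmem : ∀ t ∈ Set.Icc T T', 0 < t ∧ ψ t ≤ -L := by
    intro t ht
    refine ⟨hT.trans_le ht.1, ?_⟩
    have : Real.log t ≤ Real.log T' := Real.log_le_log (hT.trans_le ht.1) ht.2
    simp only [hψdef]; linarith
  have hψneg : ∀ t ∈ Set.Icc T T', ψ t < 0 := fun t ht =>
    lt_of_le_of_lt (hmem t ht).2 (by linarith)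
  have hEnorm : ∀ t, ‖E t‖ = 1 := by
    intro t
    rw [hEdef]
    simp only [mul_comm I]
    exact Complex.norm_exp_ofReal_mul_I (φ t)
  -- derivatives
  have hψd : ∀ t : ℝ, 0 < t → HasDerivAt ψ t⁻¹ t := by
    intro t ht
    exact (Real.hasDerivAt_log ht.ne').sub_const (Real.log β)
  have hφd : ∀ t : ℝ, 0 < t → HasDerivAt φ (ψ t) t := by
    intro t ht
    have h1 : (fun s : ℝ => Real.log s - Real.log (Real.exp 1 * β)) =ᶠ[nhds t]
        fun s => Real.log (s / (Real.exp 1 * β)) := by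
      filter_upwards [eventually_gt_nhds ht] with s hs
      rw [Real.log_div hs.ne' hc.ne']
    have hlog : HasDerivAt (fun s : ℝ => Real.log (s / (Real.exp 1 * β))) t⁻¹ t :=
      ((Real.hasDerivAt_log ht.ne').sub_const _).congr_of_eventuallyEq h1.symm
    have h2 := (hasDerivAt_id t).mul hlog
    have heq : Real.log (t / (Real.exp 1 * β)) + t * t⁻¹ = ψ t := by
      rw [Real.log_div ht.ne' hc.ne', hlogc, mul_inv_cancel₀ ht.ne']
      simp only [hψdef]; ring
    rw [hφdef, ← heq]
    rw [one_mul] at h2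
    exact h2
  have hEd : ∀ t : ℝ, 0 < t → HasDerivAt E (E t * (I * ψ t)) t := by
    intro t ht
    have : HasDerivAt (fun s : ℝ => I * (φ s : ℂ)) (I * (ψ t : ℂ)) t :=
      ((hφd t ht).ofReal_comp).const_mul I
    simpa [hEdef] using this.cexp
  have hrd : ∀ t : ℝ, 0 < t → HasDerivAt (fun s : ℝ => ((s ^ α : ℝ) : ℂ))
      ((α * t ^ (α - 1) : ℝ) : ℂ) t := fun t ht =>
    (Real.hasDerivAt_rpow_const (Or.inl ht.ne')).ofReal_comp
  -- the parts
  set D : ℝ → ℂ := fun t =>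
    (((α * t ^ (α - 1) : ℝ) : ℂ) * (I * (ψ t : ℝ)) - ((t ^ α : ℝ) : ℂ) * (I * (t:ℂ)⁻¹)) /
      (I * (ψ t : ℝ)) ^ 2 with hDdef
  set f : ℝ → ℂ := fun t => ((t ^ α : ℝ) : ℂ) / (I * (ψ t : ℝ)) with hfdef
  set G : ℝ → ℂ := fun t => f t * E t with hGdef
  have hdenne : ∀ t ∈ Set.Icc T T', (I * ((ψ t : ℝ) : ℂ)) ≠ 0 := by
    intro t ht
    have := hψneg t ht
    simp only [mul_ne_zero_iff, Complex.ofReal_ne_zero, ne_eq, I_ne_zero, not_false_eq_true,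
      true_and]
    exact this.ne
  have hGd : ∀ t ∈ Set.Icc T T',
      HasDerivAt G (((t ^ α : ℝ) : ℂ) * E t + D t * E t) t := by
    intro t ht
    have ht0 := (hmem t ht).1
    have hfd : HasDerivAt f (D t) t := by
      have hden : HasDerivAt (fun s : ℝ => I * ((ψ s : ℝ) : ℂ)) (I * ((t:ℂ)⁻¹)) t := by
        have := ((hψd t ht0).ofReal_comp).const_mul I
        simpa [Complex.ofReal_inv] using this
      exact (hrd t ht0).div hden (hdenne t ht)
    have := hfd.mul (hEd t ht0)
    have hne : ((ψ t : ℝ) : ℂ) ≠ 0 := Complex.ofReal_ne_zero.2 (hψneg t ht).ne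
    have key : f t * (E t * (I * (ψ t : ℝ))) = ((t ^ α : ℝ) : ℂ) * E t := by
      rw [hfdef]
      field_simp
    rw [hGdef]
    have e : ((t ^ α : ℝ) : ℂ) * E t + D t * E t = D t * E t + f t * (E t * (I * (ψ t : ℝ))) := by
      rw [key]; ring
    rw [e]; exact this
  -- continuity on the interval
  have hsub : Set.Icc T T' ⊆ ({0}ᶜ : Set ℝ) := fun t ht => (hT.trans_le ht.1).ne'
  have hcψ : ContinuousOn ψ (Set.Icc T T') :=
    (Real.continuousOn_log.mono hsub).sub continuousOn_const
  have hcψC : ContinuousOn (fun t : ℝ => I * ((ψ t : ℝ) : ℂ)) (Set.Icc T T') :=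
    continuousOn_const.mul (Complex.continuous_ofReal.comp_continuousOn hcψ)
  have hcφ : ContinuousOn φ (Set.Icc T T') := by
    rw [hφdef]
    refine continuousOn_id.mul (Real.continuousOn_log.comp
      (continuousOn_id.div_const _) ?_)
    intro t ht
    exact (div_pos (hT.trans_le ht.1) hc).ne'
  have hcE : ContinuousOn E (Set.Icc T T') := by
    rw [hEdef]
    exact Complex.continuous_exp.comp_continuousOn
      (continuousOn_const.mul (Complex.continuous_ofReal.comp_continuousOn hcφ))
  have hcr : ContinuousOn (fun t : ℝ => ((t ^ α : ℝ) : ℂ)) (Set.Icc T T') :=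
    Complex.continuous_ofReal.comp_continuousOn
      (continuousOn_id.rpow_const fun t ht => Or.inl (hT.trans_le ht.1).ne')
  have hcr' : ContinuousOn (fun t : ℝ => ((α * t ^ (α - 1) : ℝ) : ℂ)) (Set.Icc T T') :=
    Complex.continuous_ofReal.comp_continuousOn
      (continuousOn_const.mul (continuousOn_id.rpow_const fun t ht =>
        Or.inl (hT.trans_le ht.1).ne'))
  have hcD : ContinuousOn D (Set.Icc T T') := by
    rw [hDdef]
    refine ContinuousOn.div ?_ (hcψC.pow 2) ?_
    · refine (hcr'.mul hcψC).sub (hcr.mul (continuousOn_const.mul ?_))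
      exact ContinuousOn.inv₀ (Complex.continuous_ofReal.comp_continuousOn continuousOn_id)
        fun t ht => Complex.ofReal_ne_zero.2 (hT.trans_le ht.1).ne'
    · exact fun t ht => pow_ne_zero 2 (hdenne t ht)
  have hicc : Set.uIcc T T' = Set.Icc T T' := Set.uIcc_of_le hTT'
  have hInt1 : IntervalIntegrable (fun t : ℝ => ((t ^ α : ℝ) : ℂ) * E t)
      MeasureTheory.volume T T' := by
    apply ContinuousOn.intervalIntegrable
    rw [hicc]; exact hcr.mul hcE
  have hInt2 : IntervalIntegrable (fun t : ℝ => D t * E t) MeasureTheory.volume T T' := by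
    apply ContinuousOn.intervalIntegrable
    rw [hicc]; exact hcD.mul hcE
  have hFTC : (∫ t in T..T', (((t ^ α : ℝ) : ℂ) * E t + D t * E t)) = G T' - G T := by
    apply intervalIntegral.integral_eq_sub_of_hasDerivAt
    · intro t ht
      exact hGd t (hicc ▸ ht)
    · exact hInt1.add hInt2
  have hsplit : (∫ t in T..T', ((t ^ α : ℝ) : ℂ) * E t) =
      G T' - G T - ∫ t in T..T', D t * E t := by
    rw [← hFTC, intervalIntegral.integral_add hInt1 hInt2]; ring
  have hcongr : (∫ t in T..T', ((t ^ α : ℝ) : ℂ) *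
      Complex.exp (I * t * Real.log (t / (Real.exp 1 * β)))) =
      ∫ t in T..T', ((t ^ α : ℝ) : ℂ) * E t := by
    apply intervalIntegral.integral_congr
    intro t _
    simp only [hEdef, hφdef, Complex.ofReal_mul, mul_assoc]
  -- norms of boundary terms
  have hrpow_nonneg : ∀ t : ℝ, 0 ≤ t → (0:ℝ) ≤ t ^ α := fun t ht => Real.rpow_nonneg ht α
  have hGnorm : ∀ t ∈ Set.Icc T T', ‖G t‖ = t ^ α / |ψ t| := by
    intro t ht
    rw [hGdef, hfdef]
    simp only [norm_mul, hEnorm, mul_one, norm_div, Complex.norm_real, Complex.norm_I,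
      one_mul, Real.norm_eq_abs, _root_.abs_of_nonneg (hrpow_nonneg t (hT.trans_le ht.1).le)]
  have hT'mem : T' ∈ Set.Icc T T' := ⟨hTT', le_refl T'⟩
  have hTmem : T ∈ Set.Icc T T' := ⟨le_refl T, hTT'⟩
  have hψT' : ψ T' = -L := by simp only [hψdef]; rw [hLdef]; ring
  have hT'pow : T' ^ α ≤ 2 ^ α * T ^ α := by
    calc T' ^ α ≤ (2 * T) ^ α := Real.rpow_le_rpow hT'.le hT2 hα.le
    _ = 2 ^ α * T ^ α := Real.mul_rpow (by norm_num) hT.le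
  have hGT' : ‖G T'‖ ≤ 2 ^ α * T ^ α / L := by
    rw [hGnorm T' hT'mem, hψT', abs_neg, _root_.abs_of_pos hL0]
    gcongr
  have hGT : ‖G T‖ ≤ T ^ α / L := by
    rw [hGnorm T hTmem]
    apply div_le_div_of_nonneg_left (hrpow_nonneg T hT.le) hL0
    rw [_root_.abs_of_neg (hψneg T hTmem)]
    linarith [(hmem T hTmem).2]
  -- bound the correction integral
  set g : ℝ → ℝ := fun t => α * t ^ (α - 1) / L + T' ^ α * (t⁻¹ / (ψ t) ^ 2) with hgdef
  set A : ℝ → ℝ := fun t => t ^ α / L - T' ^ α / ψ t with hAdef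
  have hAd : ∀ t ∈ Set.Icc T T', HasDerivAt A (g t) t := by
    intro t ht
    have ht0 := (hmem t ht).1
    have hψne : ψ t ≠ 0 := (hψneg t ht).ne
    have h1 : HasDerivAt (fun s : ℝ => s ^ α / L) (α * t ^ (α - 1) / L) t :=
      (Real.hasDerivAt_rpow_const (Or.inl ht0.ne')).div_const L
    have h2 : HasDerivAt (fun s : ℝ => T' ^ α / ψ s)
        ((0 * ψ t - T' ^ α * t⁻¹) / (ψ t) ^ 2) t :=
      (hasDerivAt_const t (T' ^ α)).div (hψd t ht0) hψne
    have h3 := h1.sub h2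
    rw [hAdef]
    have e : g t = α * t ^ (α - 1) / L - (0 * ψ t - T' ^ α * t⁻¹) / ψ t ^ 2 := by
      simp only [hgdef]; ring
    rw [e]; exact h3
  have hgcont : ContinuousOn g (Set.Icc T T') := by
    rw [hgdef]
    refine ContinuousOn.add ?_ ?_
    · exact ((continuousOn_const.mul (continuousOn_id.rpow_const fun t ht =>
        Or.inl (hT.trans_le ht.1).ne')).div_const L)
    · refine continuousOn_const.mul (ContinuousOn.div ?_ (hcψ.pow 2) ?_)
      · exact continuousOn_id.inv₀ fun t ht => (hT.trans_le ht.1).ne'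
      · exact fun t ht => pow_ne_zero 2 (hψneg t ht).ne
  have hgint : IntervalIntegrable g MeasureTheory.volume T T' := by
    apply ContinuousOn.intervalIntegrable; rw [hicc]; exact hgcont
  have hgFTC : (∫ t in T..T', g t) = A T' - A T :=
    intervalIntegral.integral_eq_sub_of_hasDerivAt
      (fun t ht => hAd t (hicc ▸ ht)) hgint
  have hgval : A T' - A T ≤ 2 * (2 ^ α * T ^ α) / L := by
    rw [hAdef]
    simp only
    rw [hψT']
    have h1 : T' ^ α / ψ T ≤ 0 :=
      div_nonpos_of_nonneg_of_nonpos (hrpow_nonneg T' hT'.le) (hψneg T hTmem).le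
    have h2 : T ^ α ≥ 0 := hrpow_nonneg T hT.le
    have h3 : T' ^ α / -L = -(T' ^ α / L) := by rw [div_neg]
    rw [h3]
    have h4 : T' ^ α / L ≤ 2 ^ α * T ^ α / L := by gcongr
    have h5 : T ^ α / L ≥ 0 := div_nonneg h2 hL0.le
    have : T' ^ α / L - T ^ α / L - -(T' ^ α / L) ≤ 2 * (2 ^ α * T ^ α) / L := by
      have : 2 * (2 ^ α * T ^ α) / L = 2 ^ α * T ^ α / L + 2 ^ α * T ^ α / L := by ring
      rw [this]; linarith
    linarith [this]
  have hgnonneg : ∀ t ∈ Set.Icc T T', 0 ≤ g t := by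
    intro t ht
    have ht0 := (hmem t ht).1
    rw [hgdef]
    have : (0:ℝ) ≤ α * t ^ (α - 1) / L :=
      div_nonneg (mul_nonneg hα.le (Real.rpow_nonneg ht0.le _)) hL0.le
    have : (0:ℝ) ≤ T' ^ α * (t⁻¹ / (ψ t) ^ 2) :=
      mul_nonneg (hrpow_nonneg T' hT'.le)
        (div_nonneg (inv_nonneg.2 ht0.le) (sq_nonneg _))
    positivity
  have hDbound : ∀ t ∈ Set.Icc T T', ‖D t * E t‖ ≤ g t := by
    intro t ht
    have ht0 := (hmem t ht).1
    have hψL : L ≤ |ψ t| := by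
      rw [_root_.abs_of_neg (hψneg t ht)]; linarith [(hmem t ht).2]
    have hψpos : (0:ℝ) < |ψ t| := lt_of_lt_of_le hL0 hψL
    rw [norm_mul, hEnorm, mul_one, hDdef]
    simp only
    rw [norm_div]
    have hden : ‖(I * ((ψ t : ℝ) : ℂ)) ^ 2‖ = |ψ t| ^ 2 := by
      rw [norm_pow, norm_mul, Complex.norm_I, one_mul, Complex.norm_real, Real.norm_eq_abs]
    rw [hden]
    have hnum : ‖((α * t ^ (α - 1) : ℝ) : ℂ) * (I * ((ψ t : ℝ) : ℂ)) -
        ((t ^ α : ℝ) : ℂ) * (I * (t : ℂ)⁻¹)‖ ≤ α * t ^ (α - 1) * |ψ t| + t ^ α * t⁻¹ := by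
      refine (norm_sub_le _ _).trans ?_
      have e1 : ‖((α * t ^ (α - 1) : ℝ) : ℂ) * (I * ((ψ t : ℝ) : ℂ))‖ =
          α * t ^ (α - 1) * |ψ t| := by
        rw [norm_mul, norm_mul, Complex.norm_I, one_mul, Complex.norm_real,
          Complex.norm_real, Real.norm_eq_abs, Real.norm_eq_abs,
          _root_.abs_of_nonneg (mul_nonneg hα.le (Real.rpow_nonneg ht0.le _))]
      have e2 : ‖((t ^ α : ℝ) : ℂ) * (I * (t : ℂ)⁻¹)‖ = t ^ α * t⁻¹ := by
        rw [norm_mul, norm_mul, Complex.norm_I, one_mul, norm_inv, Complex.norm_real,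
          Complex.norm_real, Real.norm_eq_abs, Real.norm_eq_abs,
          _root_.abs_of_nonneg (hrpow_nonneg t ht0.le), _root_.abs_of_pos ht0]
      rw [e1, e2]
    calc ‖((α * t ^ (α - 1) : ℝ) : ℂ) * (I * ((ψ t : ℝ) : ℂ)) -
        ((t ^ α : ℝ) : ℂ) * (I * (t : ℂ)⁻¹)‖ / |ψ t| ^ 2
        ≤ (α * t ^ (α - 1) * |ψ t| + t ^ α * t⁻¹) / |ψ t| ^ 2 := by gcongr
      _ = α * t ^ (α - 1) / |ψ t| + t ^ α * (t⁻¹ / |ψ t| ^ 2) := by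
        rw [add_div]
        congr 1
        · rw [sq, mul_div_mul_right _ _ hψpos.ne']
        · rw [mul_div_assoc]
      _ ≤ α * t ^ (α - 1) / L + T' ^ α * (t⁻¹ / |ψ t| ^ 2) := by
        have hnn : 0 ≤ α * t ^ (α - 1) := mul_nonneg hα.le (Real.rpow_nonneg ht0.le _)
        have hxnn : 0 ≤ t⁻¹ / |ψ t| ^ 2 := div_nonneg (inv_nonneg.2 ht0.le) (sq_nonneg _)
        exact add_le_add (div_le_div_of_nonneg_left hnn hL0 hψL)
          (mul_le_mul_of_nonneg_right (Real.rpow_le_rpow ht0.le ht.2 hα.le) hxnn)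
      _ = g t := by rw [hgdef]; simp only [_root_.sq_abs]
  have hIbound : ‖∫ t in T..T', D t * E t‖ ≤ 2 * (2 ^ α * T ^ α) / L := by
    have h1 : ‖∫ t in T..T', D t * E t‖ ≤ |∫ t in T..T', g t| := by
      refine intervalIntegral.norm_integral_le_abs_of_norm_le ?_ hgint
      refine MeasureTheory.ae_restrict_of_forall_mem measurableSet_uIoc ?_
      intro t ht
      rw [Set.uIoc_of_le hTT'] at ht
      exact hDbound t (Set.Ioc_subset_Icc_self ht)
    have h2 : (0:ℝ) ≤ ∫ t in T..T', g t :=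
      intervalIntegral.integral_nonneg hTT' hgnonneg
    rw [_root_.abs_of_nonneg h2, hgFTC] at h1
    exact h1.trans hgval
  -- final assembly
  rw [hcongr, hsplit, hLeq]
  calc ‖G T' - G T - ∫ t in T..T', D t * E t‖
      ≤ ‖G T' - G T‖ + ‖∫ t in T..T', D t * E t‖ := norm_sub_le _ _
    _ ≤ (‖G T'‖ + ‖G T‖) + ‖∫ t in T..T', D t * E t‖ := by
        gcongr
        exact norm_sub_le _ _
    _ ≤ (2 ^ α * T ^ α / L + T ^ α / L) + 2 * (2 ^ α * T ^ α) / L := by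
        exact add_le_add (add_le_add hGT' hGT) hIbound
    _ = (3 * 2 ^ α + 1) * T ^ α / L := by ring
end

section
/- Let α > 0 be fixed and let J = ∫_T^{T'} t^α (t/(eβ))^{it} dt, where β > 0 and 0 < T ≤ T' ≤ 2T. Then in all cases J = O(T^{α+1/2}), with the implied constant depending only on α. -/
open Complex Real Set intervalIntegral MeasureTheory

noncomputable def PTph (β t : ℝ) : ℝ := t * (Real.log t - Real.log β - 1)
noncomputable def PTE (β t : ℝ) : ℂ := Complex.exp (I * (PTph β t))

lemma PTE_norm (β t : ℝ) : ‖PTE β t‖ = 1 := by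
  simp [PTE, Complex.norm_exp]

lemma PTph_hasDeriv {β t : ℝ} (ht : 0 < t) :
    HasDerivAt (PTph β) (Real.log t - Real.log β) t := by
  have h1 : HasDerivAt (fun t : ℝ => t * (Real.log t - Real.log β - 1))
      (1 * (Real.log t - Real.log β - 1) + t * t⁻¹) t := by
    exact (hasDerivAt_id t).mul (((Real.hasDerivAt_log ht.ne').sub_const _).sub_const 1)
  refine h1.congr_deriv ?_
  field_simp
  ring

lemma PTE_hasDeriv {β t : ℝ} (ht : 0 < t) :
    HasDerivAt (PTE β) (I * (Real.log t - Real.log β) * PTE β t) t := by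
  have h1 : HasDerivAt (fun t : ℝ => ((PTph β t : ℝ) : ℂ))
      ((Real.log t - Real.log β : ℝ) : ℂ) t := (PTph_hasDeriv ht).ofReal_comp
  have h2 := ((h1.const_mul I).cexp)
  refine h2.congr_deriv ?_
  simp only [PTE, Complex.ofReal_sub]
  ring

lemma PTE_contOn (β : ℝ) : ContinuousOn (PTE β) {t : ℝ | 0 < t} := by
  intro t ht
  exact (PTE_hasDeriv (β := β) ht).continuousAt.continuousWithinAt

lemma PT_osc {β a b lam : ℝ} (ha : 0 < a) (hab : a ≤ b) (hlam : 0 < lam)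
    (hs : ∀ t ∈ Set.Icc a b, lam ≤ |Real.log t - Real.log β|) :
    ‖∫ t in a..b, PTE β t‖ ≤ 4 / lam := by
  set s : ℝ → ℝ := fun t => Real.log t - Real.log β with hs_def
  have hIcc : Set.uIcc a b = Set.Icc a b := Set.uIcc_of_le hab
  have hpos : ∀ t ∈ Set.Icc a b, (0:ℝ) < t := fun t ht => lt_of_lt_of_le ha ht.1
  have hsne : ∀ t ∈ Set.Icc a b, s t ≠ 0 := by
    intro t ht h0
    have h := hs t ht
    have he : Real.log t - Real.log β = s t := rfl
    rw [he, h0, abs_zero] at h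
    linarith
  have hwne : ∀ t ∈ Set.Icc a b, (I * ((s t : ℝ) : ℂ)) ≠ 0 := by
    intro t ht
    simp [Complex.ext_iff, hsne t ht]
  -- continuity building blocks
  have hlogC : ContinuousOn (fun t : ℝ => Real.log t) (Set.Icc a b) :=
    Real.continuousOn_log.mono (fun t ht => (hpos t ht).ne')
  have hsC : ContinuousOn s (Set.Icc a b) := hlogC.sub continuousOn_const
  have hwC : ContinuousOn (fun t => I * ((s t : ℝ) : ℂ)) (Set.Icc a b) :=
    continuousOn_const.mul (Complex.continuous_ofReal.comp_continuousOn hsC)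
  have hEC : ContinuousOn (PTE β) (Set.Icc a b) :=
    (PTE_contOn β).mono (fun t ht => hpos t ht)
  -- the functions
  set u : ℝ → ℂ := fun t => (I * ((s t : ℝ) : ℂ))⁻¹ with hu_def
  set u' : ℝ → ℂ := fun t => -(I * ((t⁻¹ : ℝ) : ℂ)) / (I * ((s t : ℝ) : ℂ))^2 with hu'_def
  set v' : ℝ → ℂ := fun t => I * ((s t : ℝ) : ℂ) * PTE β t with hv'_def
  have hu : ∀ x ∈ Set.uIcc a b, HasDerivAt u (u' x) x := by
    intro x hx
    rw [hIcc] at hx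
    have hw : HasDerivAt (fun t : ℝ => I * ((s t : ℝ) : ℂ)) (I * ((x⁻¹ : ℝ) : ℂ)) x :=
      ((((Real.hasDerivAt_log (hpos x hx).ne').sub_const _).ofReal_comp).const_mul I)
    have h2 := (hasDerivAt_inv (hwne x hx)).comp x hw
    simp only [hu_def, hu'_def]
    refine h2.congr_deriv ?_
    rw [div_eq_mul_inv]
    ring
  have hv : ∀ x ∈ Set.uIcc a b, HasDerivAt (PTE β) (v' x) x := by
    intro x hx
    rw [hIcc] at hx
    rw [hv'_def]
    simp only [hs_def, Complex.ofReal_sub]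
    exact PTE_hasDeriv (hpos x hx)
  have hu'C : ContinuousOn u' (Set.Icc a b) := by
    apply ContinuousOn.div
    · exact (continuousOn_const.mul (Complex.continuous_ofReal.comp_continuousOn
        ((continuousOn_inv₀).mono (fun t ht => (hpos t ht).ne')))).neg
    · exact hwC.pow 2
    · intro t ht
      exact pow_ne_zero 2 (hwne t ht)
  have hv'C : ContinuousOn v' (Set.Icc a b) := hwC.mul hEC
  have hu'int : IntervalIntegrable u' MeasureTheory.volume a b :=
    (hu'C.mono (by rw [hIcc])).intervalIntegrable
  have hv'int : IntervalIntegrable v' MeasureTheory.volume a b :=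
    (hv'C.mono (by rw [hIcc])).intervalIntegrable
  -- rewrite the integral
  have hcong : ∫ t in a..b, PTE β t = ∫ t in a..b, u t * v' t := by
    apply intervalIntegral.integral_congr
    intro t ht
    rw [hIcc] at ht
    show PTE β t = (I * ((s t : ℝ) : ℂ))⁻¹ * (I * ((s t : ℝ) : ℂ) * PTE β t)
    exact (inv_mul_cancel_left₀ (hwne t ht) (PTE β t)).symm
  have hibp := intervalIntegral.integral_mul_deriv_eq_deriv_mul hu hv hu'int hv'int
  -- norms
  have hnu : ∀ t ∈ Set.Icc a b, ‖u t‖ = |s t|⁻¹ := by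
    intro t ht
    simp [hu_def, map_inv₀, Complex.norm_real]
  have hab' : a ∈ Set.Icc a b := ⟨le_refl a, hab⟩
  have hbab : b ∈ Set.Icc a b := ⟨hab, le_refl b⟩
  have hua : ‖u a‖ ≤ lam⁻¹ := by
    rw [hnu a hab']
    exact inv_anti₀ hlam (hs a hab')
  have hub : ‖u b‖ ≤ lam⁻¹ := by
    rw [hnu b hbab]
    exact inv_anti₀ hlam (hs b hbab)
  -- the integral of ‖u'‖
  have hnu' : ∀ t ∈ Set.Icc a b, ‖u' t * PTE β t‖ = t⁻¹ * ((s t)^2)⁻¹ := by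
    intro t ht
    rw [norm_mul, PTE_norm, mul_one, hu'_def]
    simp only [norm_div, norm_neg, norm_mul, norm_pow, Complex.norm_I,
      Complex.norm_real, Real.norm_eq_abs, one_mul]
    rw [abs_inv, _root_.abs_of_nonneg (hpos t ht).le, div_eq_mul_inv, _root_.sq_abs]
  have hG : ∀ t ∈ Set.uIcc a b, HasDerivAt (fun t => -(s t)⁻¹) (t⁻¹ * ((s t)^2)⁻¹) t := by
    intro t ht
    rw [hIcc] at ht
    have h1 : HasDerivAt s t⁻¹ t := (Real.hasDerivAt_log (hpos t ht).ne').sub_const _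
    have h2 := (h1.inv (hsne t ht)).neg
    refine h2.congr_deriv ?_
    field_simp
  have hGint : IntervalIntegrable (fun t => t⁻¹ * ((s t)^2)⁻¹) MeasureTheory.volume a b := by
    apply ContinuousOn.intervalIntegrable
    rw [hIcc]
    apply ContinuousOn.mul
    · exact (continuousOn_inv₀).mono (fun t ht => (hpos t ht).ne')
    · exact ContinuousOn.inv₀ (hsC.pow 2) (fun t ht => pow_ne_zero 2 (hsne t ht))
  have hGval : ∫ t in a..b, t⁻¹ * ((s t)^2)⁻¹ = (s a)⁻¹ - (s b)⁻¹ := by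
    rw [intervalIntegral.integral_eq_sub_of_hasDerivAt hG hGint]
    ring
  have hint_norm : ‖∫ t in a..b, u' t * PTE β t‖ ≤ (s a)⁻¹ - (s b)⁻¹ := by
    calc ‖∫ t in a..b, u' t * PTE β t‖ ≤ ∫ t in a..b, ‖u' t * PTE β t‖ :=
          intervalIntegral.norm_integral_le_integral_norm hab
      _ = ∫ t in a..b, t⁻¹ * ((s t)^2)⁻¹ := by
          apply intervalIntegral.integral_congr
          intro t ht; rw [hIcc] at ht; exact hnu' t ht
      _ = (s a)⁻¹ - (s b)⁻¹ := hGval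
  have hsa : (s a)⁻¹ ≤ lam⁻¹ := by
    calc (s a)⁻¹ ≤ |(s a)⁻¹| := le_abs_self _
      _ = |s a|⁻¹ := abs_inv _
      _ ≤ lam⁻¹ := inv_anti₀ hlam (hs a hab')
  have hsb : -(s b)⁻¹ ≤ lam⁻¹ := by
    calc -(s b)⁻¹ ≤ |(s b)⁻¹| := neg_le_abs _
      _ = |s b|⁻¹ := abs_inv _
      _ ≤ lam⁻¹ := inv_anti₀ hlam (hs b hbab)
  calc ‖∫ t in a..b, PTE β t‖
      = ‖u b * PTE β b - u a * PTE β a - ∫ t in a..b, u' t * PTE β t‖ := by rw [hcong, hibp]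
    _ ≤ ‖u b * PTE β b‖ + ‖u a * PTE β a‖ + ‖∫ t in a..b, u' t * PTE β t‖ := by
        exact (norm_sub_le _ _).trans (by gcongr; exact norm_sub_le _ _)
    _ ≤ lam⁻¹ + lam⁻¹ + (lam⁻¹ + lam⁻¹) := by
        gcongr ?_ + ?_ + ?_
        · rw [norm_mul, PTE_norm, mul_one]; exact hub
        · rw [norm_mul, PTE_norm, mul_one]; exact hua
        · exact hint_norm.trans (by linarith)
    _ = 4 / lam := by field_simp; ring

lemma PT_amp {α T T' β M : ℝ} (hα : 0 < α) (hT : 0 < T) (h1 : T ≤ T') (hM0 : 0 ≤ M)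
    (hM : ∀ u ∈ Set.Icc T T', ‖∫ t in T..u, PTE β t‖ ≤ M) :
    ‖∫ t in T..T', ((t ^ α : ℝ) : ℂ) * PTE β t‖ ≤ 2 * T' ^ α * M := by
  have hIcc : Set.uIcc T T' = Set.Icc T T' := Set.uIcc_of_le h1
  have hpos : ∀ t ∈ Set.Icc T T', (0:ℝ) < t := fun t ht => lt_of_lt_of_le hT ht.1
  have hopen : IsOpen {t : ℝ | 0 < t} := isOpen_lt continuous_const continuous_id
  have hEint : ∀ u ∈ Set.Icc T T', IntervalIntegrable (PTE β) MeasureTheory.volume T u := by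
    intro u hu
    apply ContinuousOn.intervalIntegrable
    apply (PTE_contOn β).mono
    rw [Set.uIcc_of_le hu.1]
    intro t ht
    exact lt_of_lt_of_le hT ht.1
  set v : ℝ → ℂ := fun u => ∫ t in T..u, PTE β t with hv_def
  have hv : ∀ x ∈ Set.uIcc T T', HasDerivAt v (PTE β x) x := by
    intro x hx
    rw [hIcc] at hx
    exact intervalIntegral.integral_hasDerivAt_right (hEint x hx)
      ((PTE_contOn β).stronglyMeasurableAtFilter hopen x (hpos x hx))
      (PTE_hasDeriv (β := β) (hpos x hx)).continuousAt
  set u' : ℝ → ℂ := fun t => ((α * t ^ (α - 1) : ℝ) : ℂ) with hu'_def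
  have hu : ∀ x ∈ Set.uIcc T T', HasDerivAt (fun t : ℝ => ((t ^ α : ℝ) : ℂ)) (u' x) x := by
    intro x hx
    rw [hIcc] at hx
    exact (Real.hasDerivAt_rpow_const (Or.inl (hpos x hx).ne')).ofReal_comp
  have hru'C : ContinuousOn (fun t : ℝ => α * t ^ (α - 1)) (Set.Icc T T') :=
    continuousOn_const.mul (continuousOn_id.rpow_const (fun t ht => Or.inl (hpos t ht).ne'))
  have hu'int : IntervalIntegrable u' MeasureTheory.volume T T' := by
    apply ContinuousOn.intervalIntegrable
    rw [hIcc]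
    exact Complex.continuous_ofReal.comp_continuousOn hru'C
  have hv'int : IntervalIntegrable (PTE β) MeasureTheory.volume T T' :=
    hEint T' ⟨h1, le_refl _⟩
  have hibp := intervalIntegral.integral_mul_deriv_eq_deriv_mul hu hv hu'int hv'int
  have hvT : v T = 0 := intervalIntegral.integral_same
  have hvC : ContinuousOn v (Set.Icc T T') := by
    intro x hx
    exact (hv x (by rwa [hIcc])).continuousAt.continuousWithinAt
  -- bound the remainder integral
  have hnorm_le : ∀ t ∈ Set.Icc T T', ‖u' t * v t‖ ≤ α * t ^ (α - 1) * M := by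
    intro t ht
    rw [norm_mul]
    have h1' : ‖u' t‖ = α * t ^ (α - 1) := by
      rw [hu'_def]
      simp only [Complex.norm_real, Real.norm_eq_abs]
      rw [_root_.abs_of_nonneg (mul_nonneg hα.le (Real.rpow_nonneg (hpos t ht).le _))]
    rw [h1']
    exact mul_le_mul_of_nonneg_left (hM t ht) (mul_nonneg hα.le (Real.rpow_nonneg (hpos t ht).le _))
  have hrint : IntervalIntegrable (fun t => α * t ^ (α - 1) * M) MeasureTheory.volume T T' := by
    apply ContinuousOn.intervalIntegrable
    rw [hIcc]
    exact hru'C.mul continuousOn_const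
  have hnvint : IntervalIntegrable (fun t => ‖u' t * v t‖) MeasureTheory.volume T T' := by
    apply ContinuousOn.intervalIntegrable
    rw [hIcc]
    exact ((Complex.continuous_ofReal.comp_continuousOn hru'C).mul hvC).norm
  have hFTC : ∫ t in T..T', α * t ^ (α - 1) = T' ^ α - T ^ α := by
    apply intervalIntegral.integral_eq_sub_of_hasDerivAt
    · intro x hx
      rw [hIcc] at hx
      exact Real.hasDerivAt_rpow_const (Or.inl (hpos x hx).ne')
    · apply ContinuousOn.intervalIntegrable
      rw [hIcc]; exact hru'C
  have hrem : ‖∫ t in T..T', u' t * v t‖ ≤ (T' ^ α - T ^ α) * M := by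
    calc ‖∫ t in T..T', u' t * v t‖ ≤ ∫ t in T..T', ‖u' t * v t‖ :=
          intervalIntegral.norm_integral_le_integral_norm h1
      _ ≤ ∫ t in T..T', α * t ^ (α - 1) * M := by
          apply intervalIntegral.integral_mono_on h1 hnvint hrint
          exact hnorm_le
      _ = (T' ^ α - T ^ α) * M := by
          rw [← hFTC, intervalIntegral.integral_mul_const]
  have hTT' : (0:ℝ) < T' := lt_of_lt_of_le hT h1
  have hend : ‖((T' ^ α : ℝ) : ℂ) * v T'‖ ≤ T' ^ α * M := by
    rw [norm_mul]
    have : ‖((T' ^ α : ℝ) : ℂ)‖ = T' ^ α := by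
      simp only [Complex.norm_real, Real.norm_eq_abs]
      exact _root_.abs_of_nonneg (Real.rpow_nonneg hTT'.le α)
    rw [this]
    exact mul_le_mul_of_nonneg_left (hM T' ⟨h1, le_refl _⟩) (Real.rpow_nonneg hTT'.le α)
  calc ‖∫ t in T..T', ((t ^ α : ℝ) : ℂ) * PTE β t‖
      = ‖((T' ^ α : ℝ) : ℂ) * v T' - ((T ^ α : ℝ) : ℂ) * v T - ∫ t in T..T', u' t * v t‖ := by
        rw [hibp]
    _ = ‖((T' ^ α : ℝ) : ℂ) * v T' - ∫ t in T..T', u' t * v t‖ := by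
        rw [hvT, mul_zero, sub_zero]
    _ ≤ ‖((T' ^ α : ℝ) : ℂ) * v T'‖ + ‖∫ t in T..T', u' t * v t‖ := norm_sub_le _ _
    _ ≤ T' ^ α * M + (T' ^ α - T ^ α) * M := add_le_add hend hrem
    _ ≤ 2 * T' ^ α * M := by
        have hTα : (0:ℝ) ≤ T ^ α := Real.rpow_nonneg hT.le α
        nlinarith

set_option maxHeartbeats 1000000 in
lemma PT_K_bound {T T' β : ℝ} (hT : 1 ≤ T) (h1 : T ≤ T') (h2 : T' ≤ 2 * T) (hβ : 0 < β) :
    ∀ u ∈ Set.Icc T T', ‖∫ t in T..u, PTE β t‖ ≤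
      (8 + 4 * Real.exp 1 ^ 2) * T ^ ((1:ℝ)/2) := by
  have hT0 : (0:ℝ) < T := lt_of_lt_of_le one_pos hT
  set sq : ℝ := T ^ ((1:ℝ)/2) with hsq_def
  have hsq1 : 1 ≤ sq := Real.one_le_rpow hT (by norm_num)
  have hsq0 : 0 < sq := lt_of_lt_of_le one_pos hsq1
  have hsqsq : sq * sq = T := by
    rw [hsq_def, ← Real.rpow_add hT0]; norm_num
  set lam : ℝ := sq⁻¹ with hlam_def
  have hlam : 0 < lam := inv_pos.mpr hsq0
  have hlam1 : lam ≤ 1 := by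
    rw [hlam_def]; exact inv_le_one_of_one_le₀ hsq1
  have hdiv : 4 / lam = 4 * sq := by
    rw [hlam_def, div_eq_mul_inv, inv_inv]
  have hTlam : T * lam = sq := by
    rw [hlam_def, ← hsqsq]; field_simp
  set a1 : ℝ := β * Real.exp (-lam) with ha1_def
  set a2 : ℝ := β * Real.exp lam with ha2_def
  have ha1pos : 0 < a1 := mul_pos hβ (Real.exp_pos _)
  have ha12 : a1 ≤ a2 := by
    apply mul_le_mul_of_nonneg_left _ hβ.le
    exact Real.exp_le_exp.mpr (by linarith)
  have hloga1 : Real.log a1 = Real.log β - lam := by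
    rw [ha1_def, Real.log_mul hβ.ne' (Real.exp_ne_zero _), Real.log_exp]; ring
  have hloga2 : Real.log a2 = Real.log β + lam := by
    rw [ha2_def, Real.log_mul hβ.ne' (Real.exp_ne_zero _), Real.log_exp]
  intro u hu
  have hTu : T ≤ u := hu.1
  have huT' : u ≤ T' := hu.2
  have hu0 : 0 < u := lt_of_lt_of_le hT0 hTu
  set c1 : ℝ := max T (min u a1) with hc1_def
  set c2 : ℝ := max T (min u a2) with hc2_def
  have hc1 : T ≤ c1 := le_max_left _ _
  have hc12 : c1 ≤ c2 := max_le_max (le_refl T) (min_le_min (le_refl u) ha12)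
  have hc2u : c2 ≤ u := max_le hTu (min_le_left _ _)
  have hc1u : c1 ≤ u := le_trans hc12 hc2u
  -- integrability helper
  have hint : ∀ x y : ℝ, T ≤ x → x ≤ y → IntervalIntegrable (PTE β) MeasureTheory.volume x y := by
    intro x y hx hxy
    apply ContinuousOn.intervalIntegrable
    apply (PTE_contOn β).mono
    rw [Set.uIcc_of_le hxy]
    intro t ht
    exact lt_of_lt_of_le hT0 (le_trans hx ht.1)
  -- split the integral
  have e2 : (∫ t in T..c1, PTE β t) + (∫ t in c1..c2, PTE β t) = ∫ t in T..c2, PTE β t :=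
    intervalIntegral.integral_add_adjacent_intervals (hint T c1 le_rfl hc1)
      (hint c1 c2 hc1 hc12)
  have e1 : (∫ t in T..c2, PTE β t) + (∫ t in c2..u, PTE β t) = ∫ t in T..u, PTE β t :=
    intervalIntegral.integral_add_adjacent_intervals (hint T c2 le_rfl (hc1.trans hc12))
      (hint c2 u (hc1.trans hc12) hc2u)
  have hsplit : ∫ t in T..u, PTE β t =
      ((∫ t in T..c1, PTE β t) + (∫ t in c1..c2, PTE β t)) + (∫ t in c2..u, PTE β t) := by
    rw [e2, e1]
  have hP1 : ‖∫ t in T..c1, PTE β t‖ ≤ 4 * sq := by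
    rcases eq_or_lt_of_le hc1 with h | h
    · rw [← h, intervalIntegral.integral_same, norm_zero]; positivity
    · have hm : T < min u a1 := by
        by_contra hcon
        push_neg at hcon
        rw [hc1_def, max_eq_left hcon] at h
        exact lt_irrefl _ h
      have hc1a1 : c1 ≤ a1 := by
        rw [hc1_def, max_eq_right hm.le]; exact min_le_right _ _
      have hosc := PT_osc (β := β) hT0 hc1 hlam (fun t ht => by
        have ht0 : 0 < t := lt_of_lt_of_le hT0 ht.1
        have hlt : Real.log t ≤ Real.log a1 :=
          Real.log_le_log ht0 (le_trans ht.2 hc1a1)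
        rw [hloga1] at hlt
        exact le_abs.mpr (Or.inr (by linarith)))
      rw [hdiv] at hosc
      exact hosc
  have hP3 : ‖∫ t in c2..u, PTE β t‖ ≤ 4 * sq := by
    rcases eq_or_lt_of_le hc2u with h | h
    · rw [h, intervalIntegral.integral_same, norm_zero]; positivity
    · have hm : a2 ≤ c2 := by
        rcases le_total u a2 with hc | hc
        · exfalso
          rw [hc2_def, min_eq_left hc, max_eq_right hTu] at h
          exact lt_irrefl _ h
        · rw [hc2_def, min_eq_right hc]; exact le_max_right _ _
      have hc20 : 0 < c2 := lt_of_lt_of_le hT0 (hc1.trans hc12)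
      have hosc := PT_osc (β := β) hc20 hc2u hlam (fun t ht => by
        have ha2' : Real.log a2 ≤ Real.log t :=
          Real.log_le_log (mul_pos hβ (Real.exp_pos _)) (le_trans hm ht.1)
        rw [hloga2] at ha2'
        exact le_abs.mpr (Or.inl (by linarith)))
      rw [hdiv] at hosc
      exact hosc
  have hP2 : ‖∫ t in c1..c2, PTE β t‖ ≤ 4 * Real.exp 1 ^ 2 * sq := by
    have hb : ‖∫ t in c1..c2, PTE β t‖ ≤ 1 * |c2 - c1| :=
      intervalIntegral.norm_integral_le_of_norm_le_const (fun x _ => by rw [PTE_norm])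
    rw [one_mul, _root_.abs_of_nonneg (by linarith : (0:ℝ) ≤ c2 - c1)] at hb
    apply le_trans hb
    rcases eq_or_lt_of_le hc12 with h | h
    · rw [← h, sub_self]; positivity
    · have ha1u : a1 < u := by
        by_contra hcon
        push_neg at hcon
        have e1' : min u a1 = u := min_eq_left hcon
        have e2' : min u a2 = u := min_eq_left (hcon.trans ha12)
        rw [hc1_def, hc2_def, e1', e2'] at h
        exact lt_irrefl _ h
      have hβ2 : β ≤ 2 * T * Real.exp lam := by
        have ha1lt : β * Real.exp (-lam) < 2 * T := by
          calc β * Real.exp (-lam) = a1 := by rw [ha1_def]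
            _ < u := ha1u
            _ ≤ 2 * T := le_trans huT' h2
        have hexp : Real.exp (-lam) * Real.exp lam = 1 := by
          rw [← Real.exp_add]; simp
        nlinarith [Real.exp_pos lam, Real.exp_pos (-lam)]
      have hkey : c2 - c1 ≤ a2 - a1 := by
        have d0 : (0:ℝ) ≤ a2 - a1 := by linarith
        have hmm : min u a2 ≤ min u a1 + (a2 - a1) := by
          rcases le_total u a1 with hc | hc
          · rw [min_eq_left hc]; linarith [min_le_left u a2]
          · rw [min_eq_right hc]; linarith [min_le_right u a2]
        have hle : c2 ≤ c1 + (a2 - a1) := by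
          apply max_le (by linarith)
          linarith [le_max_right T (min u a1)]
        linarith
      have e3 : Real.exp lam - Real.exp (-lam) ≤ 2 * lam * Real.exp lam := by
        have h1' := Real.add_one_le_exp (-(2*lam))
        have h2' : Real.exp (-(2*lam)) * Real.exp lam = Real.exp (-lam) := by
          rw [← Real.exp_add]; ring_nf
        nlinarith [Real.exp_pos lam]
      have hee : Real.exp lam ≤ Real.exp 1 := Real.exp_le_exp.mpr hlam1
      calc c2 - c1 ≤ a2 - a1 := hkey
        _ = β * (Real.exp lam - Real.exp (-lam)) := by rw [ha1_def, ha2_def]; ring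
        _ ≤ β * (2 * lam * Real.exp lam) :=
            mul_le_mul_of_nonneg_left e3 hβ.le
        _ ≤ (2 * T * Real.exp lam) * (2 * lam * Real.exp lam) :=
            mul_le_mul_of_nonneg_right hβ2
              (mul_nonneg (mul_nonneg (by norm_num) hlam.le) (Real.exp_pos lam).le)
        _ = 4 * (Real.exp lam) ^ 2 * (T * lam) := by ring
        _ ≤ 4 * Real.exp 1 ^ 2 * sq := by
            rw [hTlam]
            have h2e : (Real.exp lam) ^ 2 ≤ (Real.exp 1) ^ 2 :=
              pow_le_pow_left₀ (Real.exp_pos _).le hee 2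
            exact mul_le_mul_of_nonneg_right (by linarith) hsq0.le
  calc ‖∫ t in T..u, PTE β t‖
      = ‖((∫ t in T..c1, PTE β t) + (∫ t in c1..c2, PTE β t)) + (∫ t in c2..u, PTE β t)‖ := by
        rw [← hsplit]
    _ ≤ ‖(∫ t in T..c1, PTE β t) + (∫ t in c1..c2, PTE β t)‖ + ‖∫ t in c2..u, PTE β t‖ :=
        norm_add_le _ _
    _ ≤ (‖∫ t in T..c1, PTE β t‖ + ‖∫ t in c1..c2, PTE β t‖) + ‖∫ t in c2..u, PTE β t‖ :=
        add_le_add_left (norm_add_le _ _) _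
    _ ≤ (4 * sq + 4 * Real.exp 1 ^ 2 * sq) + 4 * sq := by
        exact add_le_add (add_le_add hP1 hP2) hP3
    _ = (8 + 4 * Real.exp 1 ^ 2) * sq := by ring

/-- Potter–Titchmarsh exponential integral estimate, unconditional case: for fixed `α > 0`,
`J = ∫_T^{T'} t^α (t/(eβ))^{it} dt = O(T^{α+1/2})` whenever `β > 0` and `0 < T ≤ T' ≤ 2T`,
the implied constant depending only on `α`. -/
theorem exp_integral_bound (α : ℝ) (hα : 0 < α) :
    ∃ C : ℝ, ∀ T T' β : ℝ, 0 < T → T ≤ T' → T' ≤ 2 * T → 0 < β →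
      ‖∫ t in T..T', ((t ^ α : ℝ) : ℂ) *
          Complex.exp (I * t * Real.log (t / (Real.exp 1 * β)))‖ ≤
        C * T ^ (α + 1 / 2) := by
  refine ⟨(2:ℝ) ^ α * (1 + 2 * (8 + 4 * Real.exp 1 ^ 2)), ?_⟩
  intro T T' β hT h1 h2 hβ
  have hT' : (0:ℝ) < T' := lt_of_lt_of_le hT h1
  have hpos : ∀ t ∈ Set.Icc T T', (0:ℝ) < t := fun t ht => lt_of_lt_of_le hT ht.1
  have hEq : (∫ t in T..T', ((t ^ α : ℝ) : ℂ) *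
        Complex.exp (I * t * Real.log (t / (Real.exp 1 * β))))
      = ∫ t in T..T', ((t ^ α : ℝ) : ℂ) * PTE β t := by
    apply intervalIntegral.integral_congr
    intro t ht
    rw [Set.uIcc_of_le h1] at ht
    have ht0 : 0 < t := hpos t ht
    have hlog : Real.log (t / (Real.exp 1 * β)) = Real.log t - Real.log β - 1 := by
      rw [Real.log_div ht0.ne' (by positivity),
        Real.log_mul (Real.exp_ne_zero 1) hβ.ne', Real.log_exp]
      ring
    congr 1
    simp only [PTE, PTph]
    congr 1
    rw [hlog]
    push_cast
    ring
  rw [hEq]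
  have hCpos : (0:ℝ) < (2:ℝ) ^ α := Real.rpow_pos_of_pos (by norm_num) α
  have hTc : (0:ℝ) ≤ T ^ (α + 1/2) := Real.rpow_nonneg hT.le _
  have h2T : (2 * T) ^ α = 2 ^ α * T ^ α := Real.mul_rpow (by norm_num) hT.le
  have hsplitexp : T ^ α * T ^ ((1:ℝ)/2) = T ^ (α + 1/2) := by
    rw [← Real.rpow_add hT]
  rcases le_or_gt 1 T with hT1 | hT1
  · -- main case T ≥ 1
    set K : ℝ := 8 + 4 * Real.exp 1 ^ 2 with hK_def
    have hK0 : (0:ℝ) ≤ K := by positivity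
    have hM0 : (0:ℝ) ≤ K * T ^ ((1:ℝ)/2) :=
      mul_nonneg hK0 (Real.rpow_nonneg hT.le _)
    have hamp := PT_amp hα hT h1 hM0 (PT_K_bound hT1 h1 h2 hβ)
    apply le_trans hamp
    have hT'2T : T' ^ α ≤ (2 * T) ^ α := Real.rpow_le_rpow hT'.le h2 hα.le
    calc 2 * T' ^ α * (K * T ^ ((1:ℝ)/2))
        ≤ 2 * ((2 * T) ^ α) * (K * T ^ ((1:ℝ)/2)) := by
          apply mul_le_mul_of_nonneg_right _ hM0
          linarith
      _ = 2 ^ α * (2 * K) * (T ^ α * T ^ ((1:ℝ)/2)) := by rw [h2T]; ring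
      _ = 2 ^ α * (2 * K) * T ^ (α + 1/2) := by rw [hsplitexp]
      _ ≤ 2 ^ α * (1 + 2 * K) * T ^ (α + 1/2) := by
          apply mul_le_mul_of_nonneg_right _ hTc
          nlinarith
  · -- small case T < 1
    have hb : ∀ x ∈ Set.uIoc T T', ‖((x ^ α : ℝ) : ℂ) * PTE β x‖ ≤ (2 * T) ^ α := by
      intro x hx
      rw [Set.uIoc_of_le h1] at hx
      have hx0 : 0 < x := lt_trans hT hx.1
      rw [norm_mul, PTE_norm, mul_one]
      have : ‖((x ^ α : ℝ) : ℂ)‖ = x ^ α := by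
        simp only [Complex.norm_real, Real.norm_eq_abs]
        exact _root_.abs_of_nonneg (Real.rpow_nonneg hx0.le α)
      rw [this]
      exact Real.rpow_le_rpow hx0.le (le_trans hx.2 h2) hα.le
    have hbound := intervalIntegral.norm_integral_le_of_norm_le_const hb
    rw [_root_.abs_of_nonneg (by linarith : (0:ℝ) ≤ T' - T)] at hbound
    apply le_trans hbound
    have hTT : T' - T ≤ T := by linarith
    have h2Tpos : (0:ℝ) ≤ (2 * T) ^ α := Real.rpow_nonneg (by linarith) α
    calc (2 * T) ^ α * (T' - T) ≤ (2 * T) ^ α * T :=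
          mul_le_mul_of_nonneg_left hTT h2Tpos
      _ = 2 ^ α * (T ^ α * T) := by rw [h2T]; ring
      _ = 2 ^ α * T ^ (α + 1) := by
          rw [Real.rpow_add_one hT.ne']
      _ ≤ 2 ^ α * T ^ (α + 1/2) := by
          apply mul_le_mul_of_nonneg_left _ hCpos.le
          apply Real.rpow_le_rpow_of_exponent_ge hT hT1.le
          linarith
      _ ≤ 2 ^ α * (1 + 2 * (8 + 4 * Real.exp 1 ^ 2)) * T ^ (α + 1/2) := by
          apply mul_le_mul_of_nonneg_right _ hTc
          nlinarith [Real.exp_pos 1, hCpos]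
end
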